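/- (Local convergence, single step.) Let Ω be a set of index pairs of m×n complex matrices, let M be an m×n complex matrix, and let C be a set of m×n complex matrices. Suppose X ∈ C, and suppose X' ∈ C is a best Frobenius-norm approximation from C to the gradient step G := X − P_Ω (X − M), i.e., ‖X' − G‖_F ≤ ‖Z − G‖_F for every Z ∈ C. Then the error on the known entries does not increase: ‖P_Ω X' − P_Ω M‖_F ≤ ‖P_Ω X − P_Ω M‖_F. -/
import Mathlib


open Matrix

/-- Frobenius norm of a complex matrix. -/
noncomputable def frobNorm {m n : ℕ} (A : Matrix (Fin m) (Fin n) ℂ) : ℝ :=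
  Real.sqrt (∑ i, ∑ j, ‖A i j‖ ^ 2)

open Classical in
/-- The mask operator `P_Ω`: keeps entries in `Ω` and zeroes out the rest. -/
noncomputable def maskOp {m n : ℕ} (Ω : Set (Fin m × Fin n))
    (A : Matrix (Fin m) (Fin n) ℂ) : Matrix (Fin m) (Fin n) ℂ :=
  fun i j => if (i, j) ∈ Ω then A i j else 0

lemma maskOp_frobNorm_le {m n : ℕ} (Ω : Set (Fin m × Fin n))
    (A : Matrix (Fin m) (Fin n) ℂ) : frobNorm (maskOp Ω A) ≤ frobNorm A := by
  classical
  apply Real.sqrt_le_sqrt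
  refine Finset.sum_le_sum fun i _ => Finset.sum_le_sum fun j _ => ?_
  simp only [maskOp]
  split_ifs
  · exact le_rfl
  · simpa using sq_nonneg ‖A i j‖

/-- **Local convergence, single step.** If `X ∈ C` and `X' ∈ C` is a best
Frobenius-norm approximation from `C` to the gradient step `G := X − P_Ω (X − M)`,
then the error on the known entries does not increase. -/
theorem stmt_12 {m n : ℕ} (Ω : Set (Fin m × Fin n))
    (M : Matrix (Fin m) (Fin n) ℂ) (C : Set (Matrix (Fin m) (Fin n) ℂ))
    (X X' : Matrix (Fin m) (Fin n) ℂ) (hX : X ∈ C) (hX' : X' ∈ C)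
    (hbest : ∀ Z ∈ C, frobNorm (X' - (X - maskOp Ω (X - M))) ≤
      frobNorm (Z - (X - maskOp Ω (X - M)))) :
    frobNorm (maskOp Ω X' - maskOp Ω M) ≤ frobNorm (maskOp Ω X - maskOp Ω M) := by
  classical
  have h1 : maskOp Ω X' - maskOp Ω M = maskOp Ω (X' - (X - maskOp Ω (X - M))) := by
    ext i j
    simp only [maskOp, Matrix.sub_apply]
    split_ifs <;> simp <;> ring
  have h2 : X - (X - maskOp Ω (X - M)) = maskOp Ω X - maskOp Ω M := by
    ext i j
    simp only [maskOp, Matrix.sub_apply]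
    split_ifs <;> simp <;> ring
  calc frobNorm (maskOp Ω X' - maskOp Ω M)
      = frobNorm (maskOp Ω (X' - (X - maskOp Ω (X - M)))) := by rw [h1]
    _ ≤ frobNorm (X' - (X - maskOp Ω (X - M))) := maskOp_frobNorm_le _ _
    _ ≤ frobNorm (X - (X - maskOp Ω (X - M))) := hbest X hX
    _ = frobNorm (maskOp Ω X - maskOp Ω M) := by rw [h2]
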